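/- The map ϑ from the space of F_q-valued functions on P^1(F_q) to homogeneous polynomials of degree q−1 given by ϑ(f) = ∑_{[a:b] ∈ P^1(F_q)} f([a:b]) (aX + bY)^{q-1} is surjective with kernel exactly the constant functions. In particular the space of average-zero functions on P^1(F_q) is isomorphic as GL_2(F_q)-module to V_{q-1}. -/
import Mathlib


open MvPolynomial

/-- The map `ϑ : F_q[P¹(F_q)] → V_{q-1}`,
`ϑ(f) = ∑_{[a:b] ∈ P¹(F_q)} f([a:b]) (aX + bY)^{q-1}`
(independent of the choice of representatives). -/
noncomputable def thetaMap (F : Type*) [Field F] [Fintype F]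
    [Fintype (Projectivization F (Fin 2 → F))]
    (f : Projectivization F (Fin 2 → F) → F) : MvPolynomial (Fin 2) F :=
  ∑ P : Projectivization F (Fin 2 → F),
    f P • (C (P.rep 0) * X 0 + C (P.rep 1) * X 1) ^ (Fintype.card F - 1)

section Aux

open Finset
set_option linter.unusedSectionVars false

variable {F : Type*} [Field F] [Fintype F]

lemma vec_eq_zero_iff (w : Fin 2 → F) : w = 0 ↔ w 0 = 0 ∧ w 1 = 0 := by
  constructor
  · rintro rfl; simp
  · rintro ⟨h0, h1⟩; funext i; fin_cases i <;> simpa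

lemma pair_ne {w : Fin 2 → F} (hw : w ≠ 0) : ![w 1, -w 0] ≠ 0 := by
  rw [Ne, vec_eq_zero_iff] at hw ⊢
  simp only [Matrix.cons_val_zero, Matrix.cons_val_one, Matrix.head_cons, neg_eq_zero]
  tauto

open scoped Classical in
lemma pow_q_sub_one (x : F) : x ^ (Fintype.card F - 1) = if x = 0 then 0 else 1 := by
  split_ifs with h
  · subst h
    exact zero_pow (by have := Fintype.one_lt_card (α := F); omega)
  · exact FiniteField.pow_card_sub_one_eq_one x h

lemma degree_eq (d : Fin 2 →₀ ℕ) : d.degree = d 0 + d 1 := by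
  rw [Finsupp.degree, ← Fin.sum_univ_two (f := fun i => d i)]
  exact Finset.sum_subset (Finset.subset_univ _)
    (fun x _ hx => Finsupp.notMem_support_iff.mp hx)

lemma eval_smul_homog {g : MvPolynomial (Fin 2) F} {n : ℕ} (hg : g.IsHomogeneous n)
    (c : F) (w : Fin 2 → F) : eval (c • w) g = c ^ n * eval w g := by
  rw [eval_eq', eval_eq', Finset.mul_sum]
  refine Finset.sum_congr rfl fun d hd => ?_
  have hdeg : d.degree = n := by
    by_contra h
    exact (mem_support_iff.mp hd) (hg.coeff_eq_zero h)
  have : ∏ i, (c • w) i ^ d i = c ^ n * ∏ i, w i ^ d i := by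
    simp only [Pi.smul_apply, smul_eq_mul, mul_pow]
    rw [Finset.prod_mul_distrib, Finset.prod_pow_eq_pow_sum]
    congr 2
    rw [← hdeg, degree_eq, Fin.sum_univ_two]
  rw [this]; ring

lemma eval_zero_homog {g : MvPolynomial (Fin 2) F} {n : ℕ} (hg : g.IsHomogeneous n)
    (hn : n ≠ 0) : eval (0 : Fin 2 → F) g = 0 := by
  have := eval_smul_homog hg 0 0
  simpa [zero_pow hn] using this


lemma funext_fin2 {v u : Fin 2 → F} (h0 : v 0 = u 0) (h1 : v 1 = u 1) : v = u := by
  funext i; fin_cases i <;> assumption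

variable [Fintype (Projectivization F (Fin 2 → F))]

/-- the point orthogonal to `w` -/
noncomputable def orthPoint (w : Fin 2 → F) (hw : w ≠ 0) :
    Projectivization F (Fin 2 → F) :=
  Projectivization.mk F ![w 1, -w 0] (pair_ne hw)

lemma orth_iff (w : Fin 2 → F) (hw : w ≠ 0) (P : Projectivization F (Fin 2 → F)) :
    P.rep 0 * w 0 + P.rep 1 * w 1 = 0 ↔ P = orthPoint w hw := by
  have hrep := P.rep_nonzero
  constructor
  · intro h
    rw [orthPoint, ← P.mk_rep, Projectivization.mk_eq_mk_iff']
    have hw' : w 0 ≠ 0 ∨ w 1 ≠ 0 := by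
      by_contra hc
      push_neg at hc
      exact hw ((vec_eq_zero_iff w).mpr ⟨hc.1, hc.2⟩)
    by_cases hw1 : w 1 ≠ 0
    · refine ⟨P.rep 0 / w 1, funext_fin2 ?_ ?_⟩ <;>
        simp only [Pi.smul_apply, smul_eq_mul, Matrix.cons_val_zero, Matrix.cons_val_one,
          Matrix.head_cons]
      · exact div_mul_cancel₀ _ hw1
      · rw [div_mul_eq_mul_div, eq_comm, eq_div_iff hw1]
        linear_combination h
    · push_neg at hw1
      have hw0 : w 0 ≠ 0 := hw'.resolve_right (by simp [hw1])
      have hr0 : P.rep 0 = 0 := by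
        have : P.rep 0 * w 0 = 0 := by rw [hw1] at h; linear_combination h
        exact (mul_eq_zero.mp this).resolve_right hw0
      refine ⟨-(P.rep 1 / w 0), funext_fin2 ?_ ?_⟩ <;>
        simp only [Pi.smul_apply, smul_eq_mul, Matrix.cons_val_zero, Matrix.cons_val_one,
          Matrix.head_cons]
      · simp [hw1, hr0]
      · field_simp
  · intro h
    rw [orthPoint, ← P.mk_rep, Projectivization.mk_eq_mk_iff] at h
    obtain ⟨a, ha⟩ := h
    have h0 : P.rep 0 = (a : F) * w 1 := by
      rw [← ha]; simp [Units.smul_def]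
    have h1 : P.rep 1 = (a : F) * (-w 0) := by
      rw [← ha]; simp [Units.smul_def]
    rw [h0, h1]; ring

lemma theta_homog (f : Projectivization F (Fin 2 → F) → F) :
    (thetaMap F f).IsHomogeneous (Fintype.card F - 1) := by
  apply MvPolynomial.IsHomogeneous.sum
  intro P _
  have h1 : (C (P.rep 0) * X 0 + C (P.rep 1) * X 1 :
      MvPolynomial (Fin 2) F).IsHomogeneous 1 :=
    (MvPolynomial.isHomogeneous_C_mul_X _ _).add (MvPolynomial.isHomogeneous_C_mul_X _ _)
  have h2 := h1.pow (Fintype.card F - 1)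
  rw [one_mul] at h2
  exact (homogeneousSubmodule (Fin 2) F _).smul_mem _ h2

lemma eval_theta (f : Projectivization F (Fin 2 → F) → F) (w : Fin 2 → F) :
    eval w (thetaMap F f) =
      ∑ P : Projectivization F (Fin 2 → F),
        f P * (P.rep 0 * w 0 + P.rep 1 * w 1) ^ (Fintype.card F - 1) := by
  rw [thetaMap, map_sum]
  exact Finset.sum_congr rfl fun P _ => by
    rw [smul_eval, map_pow, eval_add, eval_mul, eval_mul, eval_C, eval_C, eval_X, eval_X]

open scoped Classical in
lemma eval_theta' (f : Projectivization F (Fin 2 → F) → F) (w : Fin 2 → F) (hw : w ≠ 0) :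
    eval w (thetaMap F f) =
      (∑ P : Projectivization F (Fin 2 → F), f P) - f (orthPoint w hw) := by
  rw [eval_theta]
  have : ∀ P : Projectivization F (Fin 2 → F),
      f P * (P.rep 0 * w 0 + P.rep 1 * w 1) ^ (Fintype.card F - 1) =
        f P - (if P = orthPoint w hw then f P else 0) := by
    intro P
    rw [pow_q_sub_one]
    by_cases h : P = orthPoint w hw
    · rw [if_pos ((orth_iff w hw P).mpr h), if_pos h]; ring
    · rw [if_neg fun hc => h ((orth_iff w hw P).mp hc), if_neg h]; ring
  rw [Finset.sum_congr rfl fun P _ => this P, Finset.sum_sub_distrib,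
    Finset.sum_ite_eq' Finset.univ (orthPoint w hw) f, if_pos (Finset.mem_univ _)]

lemma sum_eval_homog {g : MvPolynomial (Fin 2) F}
    (hg : g.IsHomogeneous (Fintype.card F - 1)) :
    ∑ w : Fin 2 → F, eval w g = 0 := by
  have hq : 1 < Fintype.card F := Fintype.one_lt_card
  rw [Finset.sum_congr rfl fun w _ => eval_eq' w g, Finset.sum_comm]
  refine Finset.sum_eq_zero fun d hd => ?_
  have hdeg : d.degree = Fintype.card F - 1 := by
    by_contra h
    exact (mem_support_iff.mp hd) (hg.coeff_eq_zero h)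
  rw [degree_eq] at hdeg
  have key : ∃ i : Fin 2, d i < Fintype.card F - 1 := by
    by_cases h0 : d 0 = Fintype.card F - 1
    · exact ⟨1, by omega⟩
    · exact ⟨0, by omega⟩
  obtain ⟨i, hi⟩ := key
  rw [← Finset.mul_sum]
  have : ∑ w : Fin 2 → F, ∏ j, w j ^ d j = 0 := by
    have hps := Finset.prod_univ_sum (fun _ : Fin 2 => (Finset.univ : Finset F))
      (fun j x => x ^ d j)
    rw [Fintype.piFinset_univ] at hps
    rw [← hps]
    exact Finset.prod_eq_zero (Finset.mem_univ i)
      (FiniteField.sum_pow_lt_card_sub_one (K := F) (d i) hi)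
  rw [this, mul_zero]

lemma const_trick {g : MvPolynomial (Fin 2) F} (hg : g.IsHomogeneous (Fintype.card F - 1))
    {s : F} (h : ∀ w : Fin 2 → F, w ≠ 0 → eval w g = s) : s = 0 := by
  have hq : 1 < Fintype.card F := Fintype.one_lt_card
  have h0 : eval (0 : Fin 2 → F) g = 0 := eval_zero_homog hg (by omega)
  have hsum := sum_eval_homog hg
  classical
  rw [← Finset.add_sum_erase _ _ (Finset.mem_univ (0 : Fin 2 → F)), h0, zero_add,
    Finset.sum_congr rfl (fun w hw => h w (Finset.ne_of_mem_erase hw)),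
    Finset.sum_const, Finset.card_erase_of_mem (Finset.mem_univ _), Finset.card_univ] at hsum
  have hcard : Fintype.card (Fin 2 → F) = Fintype.card F ^ 2 := by
    simp [Fintype.card_fun]
  rw [hcard, nsmul_eq_mul] at hsum
  have hc : ((Fintype.card F ^ 2 - 1 : ℕ) : F) = -1 := by
    have h1 : (1 : ℕ) ≤ Fintype.card F ^ 2 := Nat.one_le_pow _ _ (by omega)
    rw [Nat.cast_sub h1, Nat.cast_pow, FiniteField.cast_card_eq_zero, Nat.cast_one]
    ring
  rw [hc] at hsum
  linear_combination -hsum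

lemma homog_eq_zero {g : MvPolynomial (Fin 2) F}
    (hg : g.IsHomogeneous (Fintype.card F - 1)) (h : ∀ w : Fin 2 → F, eval w g = 0) :
    g = 0 := by
  have hmem : ∀ {p : MvPolynomial (Fin 2) F},
      p.IsHomogeneous (Fintype.card F - 1) → ∀ d ∈ p.support, ∀ i, d i ≤ Fintype.card F - 1 := by
    intro p hp d hd i
    have hdeg : d.degree = Fintype.card F - 1 := by
      by_contra hc
      exact (mem_support_iff.mp hd) (hp.coeff_eq_zero hc)
    rw [degree_eq] at hdeg
    have : d i = d 0 ∨ d i = d 1 := by fin_cases i; exacts [Or.inl rfl, Or.inr rfl]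
    omega
  -- move to a type in the same universe as F
  set e : Fin 2 → ULift.{_, 0} (Fin 2) := ULift.up with he
  have hinj : Function.Injective e := fun a b hab => congrArg ULift.down hab
  have h1 : ∀ v : ULift (Fin 2) → F, eval v (rename e g) = 0 := by
    intro v
    rw [eval_rename]
    exact h _
  have h2 : rename e g ∈ restrictDegree (ULift (Fin 2)) F (Fintype.card F - 1) := by
    rw [mem_restrictDegree]
    intro d hd i
    rw [support_rename_of_injective hinj] at hd
    obtain ⟨d', hd', rfl⟩ := Finset.mem_image.mp hd
    obtain ⟨j⟩ := i
    rw [show (⟨j⟩ : ULift (Fin 2)) = e j from rfl, Finsupp.mapDomain_apply hinj]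
    exact hmem hg d' hd' j
  have h3 : rename e g = 0 :=
    MvPolynomial.eq_zero_of_eval_eq_zero (K := F) (σ := ULift (Fin 2)) _ h1 h2
  have := MvPolynomial.rename_injective (R := F) e hinj
  exact this (by rw [h3, map_zero])

lemma orth_surj (P : Projectivization F (Fin 2 → F)) :
    ∃ (w : Fin 2 → F) (hw : w ≠ 0), orthPoint w hw = P := by
  have hrep := P.rep_nonzero
  refine ⟨![P.rep 1, -P.rep 0], ?_, ?_⟩
  · intro hc
    rw [vec_eq_zero_iff] at hc
    simp only [Matrix.cons_val_zero, Matrix.cons_val_one, Matrix.head_cons, neg_eq_zero] at hc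
    exact hrep ((vec_eq_zero_iff _).mpr ⟨hc.2, hc.1⟩)
  · rw [orthPoint]
    conv_rhs => rw [← P.mk_rep]
    exact (Projectivization.mk_eq_mk_iff' F _ _ _ _).mpr
      ⟨-1, funext_fin2 (by simp) (by simp)⟩

lemma key_eval {g : MvPolynomial (Fin 2) F} (hg : g.IsHomogeneous (Fintype.card F - 1))
    (w : Fin 2 → F) (hw : w ≠ 0) :
    eval ![(orthPoint w hw).rep 1, -(orthPoint w hw).rep 0] g = eval w g := by
  obtain ⟨a, ha⟩ := Projectivization.exists_smul_eq_mk_rep F ![w 1, -w 0] (pair_ne hw)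
  have h0 : (orthPoint w hw).rep 0 = (a : F) * w 1 := by
    rw [orthPoint, ← ha]; simp [Units.smul_def]
  have h1 : (orthPoint w hw).rep 1 = -((a : F) * w 0) := by
    rw [orthPoint, ← ha]; simp [Units.smul_def]
  have hv : ![(orthPoint w hw).rep 1, -(orthPoint w hw).rep 0] = (-(a : F)) • w := by
    refine funext_fin2 ?_ ?_ <;>
      simp only [Matrix.cons_val_zero, Matrix.cons_val_one, Matrix.head_cons, Pi.smul_apply,
        smul_eq_mul, h0, h1] <;> ring
  rw [hv, eval_smul_homog hg,
    FiniteField.pow_card_sub_one_eq_one _ (neg_ne_zero.mpr a.ne_zero), one_mul]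

end Aux

/-- The map `ϑ` is surjective onto the homogeneous polynomials of degree `q − 1`,
and its kernel is exactly the constant functions on `P¹(F_q)`.  (In particular the
average-zero functions on `P¹(F_q)` give a module isomorphic to `V_{q-1}`.) -/
theorem thetaMap_surjective_ker_constants (F : Type*) [Field F] [Fintype F]
    [Fintype (Projectivization F (Fin 2 → F))] :
    (∀ g ∈ homogeneousSubmodule (Fin 2) F (Fintype.card F - 1),
        ∃ f : Projectivization F (Fin 2 → F) → F, thetaMap F f = g) ∧
      (∀ f : Projectivization F (Fin 2 → F) → F,
        thetaMap F f = 0 ↔ ∃ c : F, ∀ P, f P = c) := by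
  have hq : 1 < Fintype.card F := Fintype.one_lt_card
  constructor
  · intro g hgmem
    have hg : g.IsHomogeneous (Fintype.card F - 1) :=
      (mem_homogeneousSubmodule _ _).mp hgmem
    refine ⟨fun P => -eval ![P.rep 1, -P.rep 0] g, ?_⟩
    set f : Projectivization F (Fin 2 → F) → F :=
      fun P => -eval ![P.rep 1, -P.rep 0] g with hf
    have hkey : ∀ (w : Fin 2 → F) (hw : w ≠ 0), f (orthPoint w hw) = -eval w g := by
      intro w hw
      rw [hf]
      simp only
      rw [key_eval hg w hw]
    have hdiff : (thetaMap F f - g).IsHomogeneous (Fintype.card F - 1) :=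
      (theta_homog f).sub hg
    set s : F := ∑ P, f P with hs
    have heval : ∀ (w : Fin 2 → F), w ≠ 0 → eval w (thetaMap F f - g) = s := by
      intro w hw
      rw [map_sub, eval_theta' f w hw, hkey w hw]
      ring
    have hs0 : s = 0 := const_trick hdiff heval
    have hzero : thetaMap F f - g = 0 := by
      apply homog_eq_zero hdiff
      intro w
      by_cases hw : w = 0
      · subst hw; exact eval_zero_homog hdiff (by omega)
      · rw [heval w hw, hs0]
    exact sub_eq_zero.mp hzero
  · intro f
    constructor
    · intro hf
      refine ⟨∑ P, f P, fun P => ?_⟩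
      obtain ⟨w, hw, hP⟩ := orth_surj P
      have h := eval_theta' f w hw
      rw [hf, map_zero] at h
      rw [← hP]
      linear_combination h
    · rintro ⟨c, hc⟩
      have hhom := theta_homog f
      set s : F := (∑ P : Projectivization F (Fin 2 → F), f P) - c with hs
      have heval : ∀ (w : Fin 2 → F), w ≠ 0 → eval w (thetaMap F f) = s := fun w hw => by
        rw [eval_theta' f w hw, hc]
      have hs0 : s = 0 := const_trick hhom heval
      apply homog_eq_zero hhom
      intro w
      by_cases hw : w = 0
      · subst hw; exact eval_zero_homog hhom (by omega)
      · rw [heval w hw, hs0]
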